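/- arXiv:0712.2752 — 5 statements merged into one kernel-verified Lean document; each statement's English description precedes it below -/
import Mathlib

section
/- Let n ≥ 2 and let c be a cost with 0 ≤ c ≤ n/(2n−1). Then for every finite simple graph G on n vertices, the performance satisfies Π(G) ≤ n(n−1)(1−c) = Π(K_n). Hence for c ≤ n/(2n−1) (and in particular for all c < 1/2 with n large) the complete graph K_n is efficient. -/
open Classical

/-- `lamPF G` is the largest eigenvalue (Perron–Frobenius eigenvalue) of the real adjacency
matrix of the finite simple graph `G`. -/
noncomputable def lamPF {V : Type*} [Fintype V] (G : SimpleGraph V) : ℝ :=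
  sSup (spectrum ℝ (G.adjMatrix ℝ))

/-- The performance `Π(G) = ∑_{i ∈ V} λ_PF(C_i) - 2 m c`, where `C_i` is the connected
component of vertex `i` (as an induced subgraph), `m` is the number of edges and `c` the
cost per link. -/
noncomputable def perf {V : Type*} [Fintype V] (G : SimpleGraph V) (c : ℝ) : ℝ :=
  (∑ i : V, lamPF (G.induce (G.connectedComponentMk i).supp))
    - 2 * (Nat.card G.edgeSet : ℝ) * c

/-! Split `Π(G)` over the connected components. A component `C` on `k` vertices with `m` edges
and Perron–Frobenius eigenvalue `λ` contributes `k λ - 2 m c`. Reading the eigenvalue equation,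
and its square, at a coordinate of an eigenvector of maximal modulus gives `λ ≤ k - 1` and
`λ² + λ ≤ 2 m`, so the contribution is at most `k λ - c (λ² + λ)`. When `c (2k - 1) ≤ k`, which
follows from `c ≤ n / (2n - 1)`, this is at most its value `k (k - 1) (1 - c)` at `λ = k - 1`,
and hence at most `k (n - 1) (1 - c)`. Summing over the components gives `n (n - 1) (1 - c)`,
which is the performance of the `(n - 1)`-regular graph `K_n`. -/

open Finset Matrix

theorem Matrix.mem_spectrum_iff_exists_mulVec_eq_smul {K n : Type*} [Field K] [Fintype n]
    [DecidableEq n] {A : Matrix n n K} {μ : K} :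
    μ ∈ spectrum K A ↔ ∃ x ≠ 0, A *ᵥ x = μ • x := by
  rw [← spectrum_toLin', ← Module.End.hasEigenvalue_iff_mem_spectrum]
  constructor
  · intro hμ
    obtain ⟨x, hx⟩ := hμ.exists_hasEigenvector
    exact ⟨x, hx.2, by simpa using hx.apply_eq_smul⟩
  · rintro ⟨x, hx, h⟩
    exact Module.End.hasEigenvalue_of_hasEigenvector
      ⟨by simpa [Module.End.mem_eigenspace_iff] using h, hx⟩

theorem mul_two_mul_sub_one_le_of_le_div {c k n : ℝ} (hk : 1 ≤ k) (hkn : k ≤ n)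
    (hc : c ≤ n / (2 * n - 1)) : c * (2 * k - 1) ≤ k := by
  rw [le_div_iff₀ (by linarith)] at hc
  rcases le_or_gt c (1 / 2) with hc' | hc' <;> nlinarith

namespace SimpleGraph

variable {W : Type*} [Fintype W] (H : SimpleGraph W)

section Spectrum

variable [DecidableRel H.Adj] {μ : ℝ}

theorem abs_sum_le_degree_mul {x : W → ℝ} {M : ℝ} (hM : ∀ k, |x k| ≤ M) (j : W) :
    |∑ k ∈ H.neighborFinset j, x k| ≤ H.degree j * M :=
  calc |∑ k ∈ H.neighborFinset j, x k| ≤ ∑ k ∈ H.neighborFinset j, |x k| :=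
        abs_sum_le_sum_abs _ _
    _ ≤ H.degree j * M := by
        simpa [card_neighborFinset_eq_degree] using
          sum_le_card_nsmul (H.neighborFinset j) _ M fun k _ ↦ hM k

theorem exists_abs_le_degree_and_sq_le_of_mulVec_eq_smul {x : W → ℝ} (hx : x ≠ 0)
    (h : H.adjMatrix ℝ *ᵥ x = μ • x) :
    ∃ i, |μ| ≤ H.degree i ∧ μ ^ 2 ≤ ∑ j ∈ H.neighborFinset i, (H.degree j : ℝ) := by
  have heig (j : W) : μ * x j = ∑ k ∈ H.neighborFinset j, x k := by
    simpa [adjMatrix_mulVec_apply] using (congrFun h j).symm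
  obtain ⟨k, hk⟩ := Function.ne_iff.mp hx
  obtain ⟨i, -, hi⟩ := exists_max_image univ (fun j ↦ |x j|) ⟨k, mem_univ k⟩
  have hmax (j : W) : |x j| ≤ |x i| := hi j (mem_univ j)
  have hpos : 0 < |x i| := (abs_pos.mpr hk).trans_le (hmax k)
  refine ⟨i, le_of_mul_le_mul_right ?_ hpos, le_of_mul_le_mul_right ?_ hpos⟩
  · rw [← abs_mul, heig]
    exact H.abs_sum_le_degree_mul hmax i
  · have hsq : μ ^ 2 * x i = ∑ j ∈ H.neighborFinset i, ∑ k ∈ H.neighborFinset j, x k := by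
      rw [sq, mul_assoc, heig, mul_sum]
      exact sum_congr rfl fun j _ ↦ heig j
    calc μ ^ 2 * |x i| = |∑ j ∈ H.neighborFinset i, ∑ k ∈ H.neighborFinset j, x k| := by
          rw [← hsq, abs_mul, abs_of_nonneg (sq_nonneg μ)]
      _ ≤ ∑ j ∈ H.neighborFinset i, |∑ k ∈ H.neighborFinset j, x k| := abs_sum_le_sum_abs _ _
      _ ≤ ∑ j ∈ H.neighborFinset i, H.degree j * |x i| :=
          sum_le_sum fun j _ ↦ H.abs_sum_le_degree_mul hmax j
      _ = (∑ j ∈ H.neighborFinset i, (H.degree j : ℝ)) * |x i| := (sum_mul ..).symm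

theorem abs_le_maxDegree_of_mem_spectrum (hμ : μ ∈ spectrum ℝ (H.adjMatrix ℝ)) :
    |μ| ≤ H.maxDegree := by
  obtain ⟨x, hx, h⟩ := mem_spectrum_iff_exists_mulVec_eq_smul.mp hμ
  obtain ⟨i, hi, -⟩ := H.exists_abs_le_degree_and_sq_le_of_mulVec_eq_smul hx h
  exact hi.trans (mod_cast H.degree_le_maxDegree i)

theorem sq_add_le_sum_degree_of_mem_spectrum (hμ : μ ∈ spectrum ℝ (H.adjMatrix ℝ)) :
    μ ^ 2 + μ ≤ ∑ v, (H.degree v : ℝ) := by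
  obtain ⟨x, hx, h⟩ := mem_spectrum_iff_exists_mulVec_eq_smul.mp hμ
  obtain ⟨i, hi, hsq⟩ := H.exists_abs_le_degree_and_sq_le_of_mulVec_eq_smul hx h
  have hsub : ∑ j ∈ insert i (H.neighborFinset i), (H.degree j : ℝ) ≤ ∑ v, (H.degree v : ℝ) :=
    sum_le_sum_of_subset_of_nonneg (subset_univ _) fun _ _ _ ↦ Nat.cast_nonneg _
  rw [sum_insert (by simp)] at hsub
  linarith [le_abs_self μ]

end Spectrum

section PerronFrobenius

variable [Nonempty W]

theorem lamPF_mem_spectrum : lamPF H ∈ spectrum ℝ (H.adjMatrix ℝ) :=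
  have hA := H.isHermitian_adjMatrix ℝ
  Set.Nonempty.csSup_mem ⟨_, hA.eigenvalues_mem_spectrum_real (Classical.arbitrary W)⟩
    (finite_spectrum _)

theorem lamPF_le_maxDegree : lamPF H ≤ H.maxDegree :=
  (le_abs_self _).trans (H.abs_le_maxDegree_of_mem_spectrum H.lamPF_mem_spectrum)

theorem lamPF_le_card_sub_one : lamPF H ≤ Fintype.card W - 1 := by
  have : (H.maxDegree : ℝ) + 1 ≤ Fintype.card W := mod_cast H.maxDegree_lt_card_verts
  linarith [H.lamPF_le_maxDegree]

theorem sq_lamPF_add_lamPF_le : lamPF H ^ 2 + lamPF H ≤ ∑ v, (H.degree v : ℝ) :=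
  H.sq_add_le_sum_degree_of_mem_spectrum H.lamPF_mem_spectrum

theorem IsRegularOfDegree.lamPF_eq {d : ℕ} (hd : H.IsRegularOfDegree d) : lamPF H = d := by
  refine le_antisymm (hd.maxDegree_eq ▸ H.lamPF_le_maxDegree)
    (le_csSup (finite_spectrum _).bddAbove ?_)
  refine mem_spectrum_iff_exists_mulVec_eq_smul.mpr ⟨Function.const W 1, ?_, ?_⟩
  · exact Function.const_ne_zero.mpr one_ne_zero
  · ext v
    simpa using hd v

theorem card_mul_lamPF_sub_le {c : ℝ} (hc0 : 0 ≤ c)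
    (hc : c * (2 * Fintype.card W - 1) ≤ Fintype.card W) :
    Fintype.card W * lamPF H - c * ∑ v, (H.degree v : ℝ)
      ≤ Fintype.card W * (Fintype.card W - 1) * (1 - c) := by
  have hlam := H.lamPF_le_card_sub_one
  have hdeg := mul_le_mul_of_nonneg_left H.sq_lamPF_add_lamPF_le hc0
  -- `k (k - 1) (1 - c) - (k λ - c (λ² + λ)) = (k - 1 - λ) (k - c (k + λ))`
  have hfactor : 0 ≤ (Fintype.card W - 1 - lamPF H) *
      (Fintype.card W - c * (Fintype.card W + lamPF H)) :=
    mul_nonneg (by linarith) (by nlinarith)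
  nlinarith

end PerronFrobenius

variable {V : Type*} [Fintype V] (G : SimpleGraph V)

theorem degree_induce_connectedComponent_supp (C : G.ConnectedComponent) (v : C.supp) :
    (G.induce C.supp).degree v = G.degree v :=
  degree_induce_of_neighborSet_subset fun _ hw ↦ C.mem_supp_of_adj_mem_supp v.2 hw

theorem sum_connectedComponent_supp {M : Type*} [AddCommMonoid M] (f : V → M) :
    ∑ C : G.ConnectedComponent, ∑ v : C.supp, f v = ∑ v, f v := by
  convert Fintype.sum_fiberwise G.connectedComponentMk f <;> exact Iff.rfl

theorem perf_eq_sum (c : ℝ) :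
    perf G c = ∑ v, (lamPF (G.induce (G.connectedComponentMk v).supp) - c * G.degree v) := by
  rw [perf, sum_sub_distrib, ← mul_sum, ← Nat.cast_sum, sum_degrees_eq_twice_card_edges,
    Nat.card_eq_fintype_card, edgeFinset_card]
  push_cast
  ring

theorem sum_supp_lamPF_sub_eq (C : G.ConnectedComponent) (c : ℝ) :
    ∑ v : C.supp, (lamPF (G.induce (G.connectedComponentMk v).supp) - c * G.degree v)
      = Fintype.card C.supp * lamPF (G.induce C.supp)
        - c * ∑ v : C.supp, ((G.induce C.supp).degree v : ℝ) := by
  have hlam (v : C.supp) :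
      lamPF (G.induce (G.connectedComponentMk v).supp) = lamPF (G.induce C.supp) := by
    rw [(v.2 : G.connectedComponentMk v = C)]
  simp only [sum_sub_distrib, hlam, sum_const, card_univ, nsmul_eq_mul, ← mul_sum,
    degree_induce_connectedComponent_supp]

theorem perf_le {c : ℝ} (hc0 : 0 ≤ c) (hc : c ≤ Fintype.card V / (2 * Fintype.card V - 1)) :
    perf G c ≤ Fintype.card V * (Fintype.card V - 1) * (1 - c) := by
  set n := Fintype.card V
  have hcomp (C : G.ConnectedComponent) :
      ∑ v : C.supp, (lamPF (G.induce (G.connectedComponentMk v).supp) - c * G.degree v)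
        ≤ ∑ _v : C.supp, ((n : ℝ) - 1) * (1 - c) := by
    have : Nonempty C.supp := C.nonempty_supp.to_subtype
    have hk : (1 : ℝ) ≤ Fintype.card C.supp := mod_cast Fintype.card_pos
    have hkn : (Fintype.card C.supp : ℝ) ≤ n := mod_cast Fintype.card_subtype_le _
    have hck := mul_two_mul_sub_one_le_of_le_div hk hkn hc
    have hc1 : c ≤ 1 := by nlinarith
    rw [sum_supp_lamPF_sub_eq, sum_const, card_univ, nsmul_eq_mul, ← mul_assoc]
    calc _ ≤ Fintype.card C.supp * (Fintype.card C.supp - 1) * (1 - c) :=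
          (G.induce C.supp).card_mul_lamPF_sub_le hc0 hck
      _ ≤ Fintype.card C.supp * (n - 1) * (1 - c) := by gcongr
  calc perf G c
      = ∑ C : G.ConnectedComponent, ∑ v : C.supp,
          (lamPF (G.induce (G.connectedComponentMk v).supp) - c * G.degree v) := by
        rw [perf_eq_sum]
        exact (G.sum_connectedComponent_supp _).symm
    _ ≤ ∑ C : G.ConnectedComponent, ∑ _v : C.supp, ((n : ℝ) - 1) * (1 - c) :=
        sum_le_sum fun C _ ↦ hcomp C
    _ = n * (n - 1) * (1 - c) := by
        rw [G.sum_connectedComponent_supp fun _ ↦ ((n : ℝ) - 1) * (1 - c), sum_const, card_univ,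
          nsmul_eq_mul, mul_assoc]

theorem IsRegularOfDegree.perf_eq {d : ℕ} (hd : G.IsRegularOfDegree d) (c : ℝ) :
    perf G c = Fintype.card V * d * (1 - c) := by
  have hlam (i : V) : lamPF (G.induce (G.connectedComponentMk i).supp) = d := by
    have : Nonempty (G.connectedComponentMk i).supp := ⟨⟨i, rfl⟩⟩
    refine IsRegularOfDegree.lamPF_eq _ fun v ↦ ?_
    convert (G.degree_induce_connectedComponent_supp _ v).trans (hd v)
  simp only [perf_eq_sum, hlam, hd _, sum_const, card_univ, nsmul_eq_mul]
  ring

theorem perf_top (c : ℝ) :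
    perf (⊤ : SimpleGraph V) c = Fintype.card V * (Fintype.card V - 1) * (1 - c) := by
  rw [IsRegularOfDegree.perf_eq _ (d := Fintype.card V - 1)
    (by convert (IsRegularOfDegree.top : (⊤ : SimpleGraph V).IsRegularOfDegree _))]
  rcases (Fintype.card V).eq_zero_or_pos with h | h
  · simp [h]
  · rw [Nat.cast_pred h]

end SimpleGraph

theorem completeGraph_efficient_low_cost_general (n : ℕ) (c : ℝ)
    (hc0 : 0 ≤ c) (hc : c ≤ (n : ℝ) / (2 * (n : ℝ) - 1)) :
    (∀ G : SimpleGraph (Fin n), perf G c ≤ (n : ℝ) * ((n : ℝ) - 1) * (1 - c)) ∧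
      perf (⊤ : SimpleGraph (Fin n)) c = (n : ℝ) * ((n : ℝ) - 1) * (1 - c) := by
  refine ⟨fun G ↦ ?_, ?_⟩
  · simpa using G.perf_le hc0 (by simpa using hc)
  · simpa using SimpleGraph.perf_top (V := Fin n) c

/-- For `n ≥ 2` and cost `0 ≤ c ≤ n / (2n - 1)`, every graph `G` on `n`
vertices satisfies `Π(G) ≤ n (n - 1) (1 - c) = Π(K_n)`; hence the complete graph `K_n` is
efficient in this cost range. -/
theorem completeGraph_efficient_low_cost (n : ℕ) (hn : 2 ≤ n) (c : ℝ)
    (hc0 : 0 ≤ c) (hc : c ≤ (n : ℝ) / (2 * (n : ℝ) - 1)) :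
    (∀ G : SimpleGraph (Fin n), perf G c ≤ (n : ℝ) * ((n : ℝ) - 1) * (1 - c)) ∧
      perf (⊤ : SimpleGraph (Fin n)) c = (n : ℝ) * ((n : ℝ) - 1) * (1 - c) :=
  completeGraph_efficient_low_cost_general n c hc0 hc
end

section
/- Let n ≥ 2 and let c be a cost with c > n/(2n−1). Then for every finite simple graph G on n vertices, the performance satisfies Π(G) ≤ (n − c)² / (4c), i.e. Π(G) ≤ (n/2)(√((n² − c²)/c² + 1) − 1) − (n² − c²)/(4c). -/
open Classical

/-!
Stanley's bound: a nonnegative vector `u ≠ 0` with `μ u ≤ A u` (for `μ = |λ|` it is `|v|`,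
`v` a `λ`-eigenvector) gives `μ² ‖u‖² ≤ ‖A u‖² ≤ ∑ⱼ (2m - dⱼ) uⱼ²` by Cauchy–Schwarz and
`μ ‖u‖² ≤ uᵀ A u ≤ ∑ⱼ dⱼ uⱼ²`, so `μ² + μ ≤ 2m`. A component has at most `m` edges, so every
summand `x` of `Π(G)` satisfies `x² + x ≤ 2m`; if `x` is the largest one, then
`Π(G) ≤ n x - c (x² + x) ≤ (n - c)² / (4c)`, the maximum of this quadratic in `x`.
-/

open Finset

namespace SimpleGraph

variable {V : Type*} [Fintype V] (G : SimpleGraph V) [DecidableRel G.Adj]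

lemma sum_sum_neighborFinset_comm (f : V → V → ℝ) :
    ∑ i, ∑ j ∈ G.neighborFinset i, f i j = ∑ j, ∑ i ∈ G.neighborFinset j, f i j := by
  simp only [neighborFinset_eq_filter, sum_filter]
  rw [sum_comm]
  simp only [adj_comm]

lemma sum_degree_neighborFinset_le [DecidableEq V] (j : V) :
    ∑ i ∈ G.neighborFinset j, (G.degree i : ℝ) ≤ 2 * #G.edgeFinset - G.degree j := by
  have hsub : G.neighborFinset j ⊆ univ.erase j := fun i hi =>
    mem_erase.2 ⟨(G.ne_of_adj ((G.mem_neighborFinset _ _).1 hi)).symm, mem_univ i⟩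
  calc ∑ i ∈ G.neighborFinset j, (G.degree i : ℝ)
      ≤ ∑ i ∈ univ.erase j, (G.degree i : ℝ) :=
        sum_le_sum_of_subset_of_nonneg hsub fun _ _ _ => Nat.cast_nonneg _
    _ = 2 * #G.edgeFinset - G.degree j := by
        rw [eq_sub_iff_add_eq, sum_erase_add _ _ (mem_univ j)]
        exact_mod_cast G.sum_degrees_eq_twice_card_edges

lemma sum_sq_sum_neighborFinset_le [DecidableEq V] (u : V → ℝ) :
    ∑ i, (∑ j ∈ G.neighborFinset i, u j) ^ 2
      ≤ ∑ j, (2 * #G.edgeFinset - G.degree j) * u j ^ 2 :=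
  calc ∑ i, (∑ j ∈ G.neighborFinset i, u j) ^ 2
      ≤ ∑ i, (G.degree i : ℝ) * ∑ j ∈ G.neighborFinset i, u j ^ 2 := by
        gcongr with i
        rw [← card_neighborFinset_eq_degree]
        exact sq_sum_le_card_mul_sum_sq
    _ = ∑ j, (∑ i ∈ G.neighborFinset j, (G.degree i : ℝ)) * u j ^ 2 := by
        simp_rw [mul_sum, sum_mul]
        exact G.sum_sum_neighborFinset_comm _
    _ ≤ ∑ j, (2 * #G.edgeFinset - G.degree j) * u j ^ 2 := by
        gcongr with j
        exact G.sum_degree_neighborFinset_le j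

lemma sum_mul_sum_neighborFinset_le (u : V → ℝ) :
    ∑ i, u i * ∑ j ∈ G.neighborFinset i, u j ≤ ∑ j, (G.degree j : ℝ) * u j ^ 2 :=
  calc ∑ i, u i * ∑ j ∈ G.neighborFinset i, u j
      ≤ ∑ i, ∑ j ∈ G.neighborFinset i, (u i ^ 2 + u j ^ 2) / 2 := by
        simp_rw [mul_sum]
        gcongr with i _ j _
        nlinarith [sq_nonneg (u i - u j)]
    _ = (∑ i, ∑ j ∈ G.neighborFinset i, u i ^ 2
          + ∑ i, ∑ j ∈ G.neighborFinset i, u j ^ 2) / 2 := by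
        simp_rw [add_div, sum_add_distrib, sum_div]
    _ = ∑ j, (G.degree j : ℝ) * u j ^ 2 := by
        rw [G.sum_sum_neighborFinset_comm fun _ j => u j ^ 2]
        simp [card_neighborFinset_eq_degree]

theorem sq_add_le_of_le_sum_neighborFinset [DecidableEq V] {μ : ℝ} (hμ : 0 ≤ μ) {u : V → ℝ}
    (hu : 0 ≤ u) (hu0 : u ≠ 0) (h : ∀ i, μ * u i ≤ ∑ j ∈ G.neighborFinset i, u j) :
    μ ^ 2 + μ ≤ 2 * #G.edgeFinset := by
  set T := ∑ i, u i ^ 2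
  have hT : 0 < T := by
    obtain ⟨i, hi⟩ := Function.ne_iff.mp hu0
    exact sum_pos' (fun i _ => sq_nonneg (u i)) ⟨i, mem_univ i, pow_pos ((hu i).lt_of_ne' hi) 2⟩
  have hsq : μ ^ 2 * T ≤ ∑ i, (∑ j ∈ G.neighborFinset i, u j) ^ 2 := by
    rw [mul_sum]
    gcongr with i
    rw [← mul_pow]
    exact pow_le_pow_left₀ (mul_nonneg hμ (hu i)) (h i) 2
  have hlin : μ * T ≤ ∑ i, u i * ∑ j ∈ G.neighborFinset i, u j := by
    rw [mul_sum]
    refine sum_le_sum fun i _ => ?_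
    nlinarith [mul_le_mul_of_nonneg_right (h i) (hu i)]
  have : (μ ^ 2 + μ) * T ≤ 2 * #G.edgeFinset * T :=
    calc (μ ^ 2 + μ) * T
        ≤ ∑ j, (2 * #G.edgeFinset - G.degree j) * u j ^ 2 + ∑ j, (G.degree j : ℝ) * u j ^ 2 := by
          linarith [G.sum_sq_sum_neighborFinset_le u, G.sum_mul_sum_neighborFinset_le u]
      _ = 2 * #G.edgeFinset * T := by
          rw [← sum_add_distrib, mul_sum]
          ring_nf
  exact le_of_mul_le_mul_right this hT

theorem sq_abs_add_abs_le_of_mem_spectrum [DecidableEq V] {μ : ℝ}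
    (hμ : μ ∈ spectrum ℝ (G.adjMatrix ℝ)) : |μ| ^ 2 + |μ| ≤ 2 * #G.edgeFinset := by
  rw [← Matrix.spectrum_toLin', ← Module.End.hasEigenvalue_iff_mem_spectrum] at hμ
  obtain ⟨v, hv⟩ := hμ.exists_hasEigenvector
  refine G.sq_add_le_of_le_sum_neighborFinset (abs_nonneg μ) (u := fun i => |v i|)
    (fun i => abs_nonneg (v i)) ?_ fun i => ?_
  · exact fun h0 => hv.2 (funext fun i => abs_eq_zero.1 (congrFun h0 i))
  · have hvi := congrFun hv.apply_eq_smul i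
    rw [Matrix.toLin'_apply, adjMatrix_mulVec_apply] at hvi
    calc |μ| * |v i| = |∑ j ∈ G.neighborFinset i, v j| := by
          rw [hvi, Pi.smul_apply, smul_eq_mul, abs_mul]
      _ ≤ ∑ j ∈ G.neighborFinset i, |v j| := abs_sum_le_sum_abs _ _

end SimpleGraph

theorem lamPF_sq_add_le {V : Type*} [Fintype V] [Nonempty V] (G : SimpleGraph V) :
    lamPF G ^ 2 + lamPF G ≤ 2 * Nat.card G.edgeSet := by
  have hne : (spectrum ℝ (G.adjMatrix ℝ)).Nonempty :=
    ⟨_, (Matrix.isHermitian_iff_isSymm.2 G.isSymm_adjMatrix).eigenvalues_mem_spectrum_real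
      (Classical.arbitrary V)⟩
  have hmem : lamPF G ∈ spectrum ℝ (G.adjMatrix ℝ) := hne.csSup_mem (Matrix.finite_spectrum _)
  rw [Nat.card_eq_fintype_card, ← SimpleGraph.edgeFinset_card]
  calc lamPF G ^ 2 + lamPF G ≤ |lamPF G| ^ 2 + |lamPF G| := by
        rw [sq_abs]
        gcongr
        exact le_abs_self _
    _ ≤ _ := G.sq_abs_add_abs_le_of_mem_spectrum hmem

theorem SimpleGraph.card_edgeSet_induce_le {V : Type*} [Finite V] (G : SimpleGraph V)
    (s : Set V) : Nat.card (G.induce s).edgeSet ≤ Nat.card G.edgeSet :=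
  Nat.card_le_card_of_injective _ (SimpleGraph.Embedding.induce s).mapEdgeSet.injective

theorem sum_sub_two_mul_mul_le_of_sq_add_le {ι : Type*} [Fintype ι] {f : ι → ℝ} {m c : ℝ}
    (hc : 0 < c) (hm : 0 ≤ m) (hf : ∀ i, f i ^ 2 + f i ≤ 2 * m) :
    ∑ i, f i - 2 * m * c ≤ (Fintype.card ι - c) ^ 2 / (4 * c) := by
  rw [le_div_iff₀ (by positivity)]
  rcases isEmpty_or_nonempty ι with hι | hι
  · simp only [univ_eq_empty, sum_empty, Fintype.card_eq_zero, CharP.cast_eq_zero]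
    nlinarith [mul_nonneg hm hc.le]
  obtain ⟨k, hk⟩ := Finite.exists_max f
  have hsum : ∑ i, f i ≤ Fintype.card ι * f k := by
    simpa using sum_le_card_nsmul univ f (f k) fun i _ => hk i
  nlinarith [sq_nonneg (Fintype.card ι - c - 2 * c * f k), mul_le_mul_of_nonneg_left (hf k) hc.le,
    mul_le_mul_of_nonneg_right hsum hc.le]

theorem perf_le {V : Type*} [Fintype V] (G : SimpleGraph V) {c : ℝ} (hc : 0 < c) :
    perf G c ≤ (Fintype.card V - c) ^ 2 / (4 * c) := by
  refine sum_sub_two_mul_mul_le_of_sq_add_le hc (Nat.cast_nonneg _) fun i => ?_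
  have : Nonempty (G.connectedComponentMk i).supp := ⟨⟨i, rfl⟩⟩
  exact (lamPF_sq_add_le _).trans (by gcongr; exact G.card_edgeSet_induce_le _)

/-- For `n ≥ 2` and cost `c > n / (2n - 1)`, every graph `G` on `n` vertices
satisfies `Π(G) ≤ (n - c)² / (4c)`, which equals
`(n/2) (√((n² - c²)/c² + 1) - 1) - (n² - c²)/(4c)`. -/
theorem perf_le_of_high_cost (n : ℕ) (hn : 2 ≤ n) (c : ℝ)
    (hc : (n : ℝ) / (2 * (n : ℝ) - 1) < c) :
    (∀ G : SimpleGraph (Fin n), perf G c ≤ ((n : ℝ) - c) ^ 2 / (4 * c)) ∧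
      ((n : ℝ) - c) ^ 2 / (4 * c) =
        ((n : ℝ) / 2) * (Real.sqrt (((n : ℝ) ^ 2 - c ^ 2) / c ^ 2 + 1) - 1)
          - ((n : ℝ) ^ 2 - c ^ 2) / (4 * c) := by
  have hn2 : (2 : ℝ) ≤ n := by exact_mod_cast hn
  have hc0 : 0 < c := (div_pos (by positivity) (by linarith)).trans hc
  refine ⟨fun G => by simpa using perf_le G hc0, ?_⟩
  have hsqrt : ((n : ℝ) ^ 2 - c ^ 2) / c ^ 2 + 1 = ((n : ℝ) / c) ^ 2 := by
    field_simp
    ring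
  rw [hsqrt, Real.sqrt_sq (by positivity)]
  field_simp
  ring
end

section
/- For every cost c > 0 there exists n₀ such that for all n ≥ n₀ the star K_{1,n−1} is bilaterally stable: for every pair of distinct non-adjacent vertices u, v of K_{1,n−1} (i.e. every pair of distinct leaves), the increase in the largest eigenvalue from adding the edge uv satisfies λ_PF(K_{1,n−1} + uv) − λ_PF(K_{1,n−1}) < c; and moreover the increase from attaching a new leaf to the center, √n − √(n−1), is also less than c. -/
open Classical

/-- The star `K_{1,n-1}` on `n` vertices: vertex `0` (the center) is adjacent to every
other vertex (the leaves), and there are no further edges. -/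
def starG (n : ℕ) : SimpleGraph (Fin n) where
  Adj u v := u ≠ v ∧ ((u : ℕ) = 0 ∨ (v : ℕ) = 0)
  symm := by
    constructor
    intro u v h
    exact ⟨h.1.symm, h.2.symm⟩
  loopless := by
    constructor
    intro u h
    exact h.1 rfl

/-!
The star has the positive eigenvector `(√(n-1), 1, …, 1)`, so `λ_PF(K_{1,n-1}) ≥ √(n-1)`.
Conversely, if `μ` is an eigenvalue of an adjacency matrix `A` then `μ²` is an eigenvalue of the
nonnegative matrix `A²`, so by Gershgorin it is at most the largest row sum of `A²`, i.e. the
largest number of walks of length two from a vertex. In `K_{1,n-1} + uv` this number is `n + 1`,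
so both increases are at most `√(n+1) - √(n-1) = 2 / (√(n+1) + √(n-1))`, which tends to `0`.
-/

open Matrix Filter Finset SimpleGraph

namespace Matrix

variable {ι : Type*} [Fintype ι] [DecidableEq ι]

theorem mem_spectrum_of_mulVec_eq_smul {M : Matrix ι ι ℝ} {μ : ℝ} {v : ι → ℝ} (hv : v ≠ 0)
    (h : M *ᵥ v = μ • v) : μ ∈ spectrum ℝ M := by
  rw [← spectrum_toLin']
  exact (Module.End.hasEigenvalue_of_hasEigenvector
    ⟨Module.End.mem_eigenspace_iff.2 (by simpa using h), hv⟩).mem_spectrum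

theorem le_of_mem_spectrum_of_mulVec_one_le {M : Matrix ι ι ℝ} (hM : ∀ i j, 0 ≤ M i j) {B : ℝ}
    (hB : ∀ i, (M *ᵥ 1) i ≤ B) {μ : ℝ} (hμ : μ ∈ spectrum ℝ M) : μ ≤ B := by
  rw [← spectrum_toLin', ← Module.End.hasEigenvalue_iff_mem_spectrum] at hμ
  obtain ⟨k, hk⟩ := eigenvalue_mem_ball hμ
  rw [Metric.mem_closedBall, Real.dist_eq] at hk
  calc μ ≤ M k k + ∑ j ∈ univ.erase k, ‖M k j‖ := by linarith [le_abs_self (μ - M k k)]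
    _ = (M *ᵥ 1) k := by simp [Real.norm_of_nonneg (hM _ _), mulVec, dotProduct]
    _ ≤ B := hB k

end Matrix

namespace SimpleGraph

variable {V : Type*}

theorem sq_le_of_mem_spectrum_adjMatrix [Fintype V] [DecidableEq V] (G : SimpleGraph V)
    [DecidableRel G.Adj] {B : ℝ} (hB : ∀ i, (G.adjMatrix ℝ *ᵥ (G.adjMatrix ℝ *ᵥ 1)) i ≤ B) {μ : ℝ}
    (hμ : μ ∈ spectrum ℝ (G.adjMatrix ℝ)) : μ ^ 2 ≤ B := by
  refine le_of_mem_spectrum_of_mulVec_one_le (fun i j => ?_) (fun i => ?_)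
    (spectrum.pow_mem_pow _ 2 hμ)
  · rw [sq, adjMatrix_mul_apply]
    exact sum_nonneg fun k _ => by rw [adjMatrix_apply]; positivity
  · rw [sq, ← mulVec_mulVec]
    exact hB i

theorem adjMatrix_sup_of_disjoint {α : Type*} [AddZeroClass α] [One α] {G H : SimpleGraph V}
    [DecidableRel G.Adj] [DecidableRel H.Adj] [DecidableRel (G ⊔ H).Adj] (h : Disjoint G H) :
    (G ⊔ H).adjMatrix α = G.adjMatrix α + H.adjMatrix α := by
  ext i j
  by_cases hG : G.Adj i j
  · have hH : ¬ H.Adj i j := fun hH => h.le_bot ⟨hG, hH⟩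
    simp [adjMatrix_apply, hG, hH]
  · by_cases hH : H.Adj i j <;> simp [adjMatrix_apply, hG, hH]

theorem adjMatrix_edge_mulVec_apply [Fintype V] [DecidableEq V] {u v : V} (huv : u ≠ v)
    [DecidableRel (edge u v).Adj] (f : V → ℝ) (i : V) :
    ((edge u v).adjMatrix ℝ *ᵥ f) i = (if i = u then f v else 0) + (if i = v then f u else 0) := by
  have hentry : ∀ j, (edge u v).adjMatrix ℝ i j =
      (if i = u ∧ j = v then 1 else 0) + (if i = v ∧ j = u then 1 else 0) := by
    intro j
    simp only [adjMatrix_apply, edge_adj]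
    split_ifs <;> grind
  simp only [mulVec, dotProduct, hentry, add_mul, sum_add_distrib, ite_and, ite_mul, one_mul,
    zero_mul]
  split_ifs <;> simp

end SimpleGraph

theorem le_lamPF_of_mulVec_eq_smul {V : Type*} [Fintype V] (G : SimpleGraph V)
    [DecidableRel G.Adj] {μ : ℝ} {w : V → ℝ} (hw : w ≠ 0) (h : G.adjMatrix ℝ *ᵥ w = μ • w) :
    μ ≤ lamPF G := by
  -- `lamPF` is built from classical decidability instances; `convert` matches them with ours.
  refine le_csSup (Matrix.finite_spectrum _).bddAbove ?_
  convert mem_spectrum_of_mulVec_eq_smul hw h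

theorem lamPF_le_sqrt_of_mulVec_mulVec_one_le {V : Type*} [Fintype V] (G : SimpleGraph V)
    [DecidableRel G.Adj] {B : ℝ} (hB : ∀ i, (G.adjMatrix ℝ *ᵥ (G.adjMatrix ℝ *ᵥ 1)) i ≤ B) :
    lamPF G ≤ √B := by
  refine Real.sSup_le (fun μ hμ => Real.le_sqrt_of_sq_le ?_) (Real.sqrt_nonneg _)
  exact G.sq_le_of_mem_spectrum_adjMatrix hB (by convert hμ)

section Star

variable {n : ℕ} [NeZero n]

theorem starG_adj {i j : Fin n} : (starG n).Adj i j ↔ i ≠ j ∧ (i = 0 ∨ j = 0) := by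
  simp only [starG, Fin.val_eq_zero_iff]

theorem starG_adjMatrix_mulVec_apply [DecidableRel (starG n).Adj] (f : Fin n → ℝ) (i : Fin n) :
    ((starG n).adjMatrix ℝ *ᵥ f) i = if i = 0 then ∑ j ∈ univ.erase 0, f j else f 0 := by
  simp only [mulVec, dotProduct, adjMatrix_apply, starG_adj, ite_mul, one_mul, zero_mul,
    ← sum_filter]
  split_ifs with hi
  · congr 1; ext j; subst hi; simp [eq_comm]
  · rw [← sum_singleton f 0]
    congr 1; ext j; simp only [mem_filter, mem_univ, true_and, mem_singleton]; grind

theorem sqrt_le_lamPF_starG (hn : 1 < n) : √((n : ℝ) - 1) ≤ lamPF (starG n) := by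
  set s := √((n : ℝ) - 1)
  refine le_lamPF_of_mulVec_eq_smul _ (w := fun i => if i = 0 then s else 1) ?_ ?_
  · intro h
    simpa [Fin.ext_iff] using congrFun h ⟨1, hn⟩
  · ext i
    rw [starG_adjMatrix_mulVec_apply]
    by_cases hi : i = 0
    · have hsum : ∑ j ∈ univ.erase (0 : Fin n), (if j = 0 then s else 1) = (n : ℝ) - 1 := by
        rw [sum_congr rfl fun j hj => if_neg (ne_of_mem_erase hj)]
        simp [card_erase_of_mem, Nat.cast_pred (NeZero.pos n)]
      have hn' : (1 : ℝ) ≤ n := by exact_mod_cast hn.le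
      simp [hi, hsum, s, Real.mul_self_sqrt (sub_nonneg.2 hn')]
    · simp [hi]

theorem starG_sup_edge_adjMatrix_mulVec_apply {u v : Fin n} (hu : u ≠ 0) (hv : v ≠ 0)
    (huv : u ≠ v) [DecidableRel (starG n ⊔ edge u v).Adj] (f : Fin n → ℝ) (i : Fin n) :
    ((starG n ⊔ edge u v).adjMatrix ℝ *ᵥ f) i =
      (if i = 0 then ∑ j ∈ univ.erase 0, f j else f 0) + (if i = u then f v else 0) +
        (if i = v then f u else 0) := by
  have hdisj : Disjoint (starG n) (edge u v) :=
    (disjoint_edge _).2 fun h => (starG_adj.1 h).2.elim hu hv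
  rw [adjMatrix_sup_of_disjoint hdisj, add_mulVec, Pi.add_apply, starG_adjMatrix_mulVec_apply,
    adjMatrix_edge_mulVec_apply huv, add_assoc]

theorem starG_sup_edge_mulVec_mulVec_one_le {u v : Fin n} (hu : u ≠ 0) (hv : v ≠ 0)
    (huv : u ≠ v) [DecidableRel (starG n ⊔ edge u v).Adj] (i : Fin n) :
    ((starG n ⊔ edge u v).adjMatrix ℝ *ᵥ ((starG n ⊔ edge u v).adjMatrix ℝ *ᵥ 1)) i ≤ n + 1 := by
  set A := (starG n ⊔ edge u v).adjMatrix ℝ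
  have hdeg : ∀ j, (A *ᵥ 1) j = if j = 0 then (n : ℝ) - 1 else
      1 + (if j = u then 1 else 0) + (if j = v then 1 else 0) := fun j => by
    rw [starG_sup_edge_adjMatrix_mulVec_apply hu hv huv]
    split_ifs <;> simp_all [card_erase_of_mem, Nat.cast_pred (NeZero.pos n)]
  rw [starG_sup_edge_adjMatrix_mulVec_apply hu hv huv]
  by_cases hi : i = 0
  · have hsum : ∑ j ∈ univ.erase 0, (A *ᵥ 1) j = n + 1 := by
      rw [sum_congr rfl fun j hj => (hdeg j).trans (if_neg (ne_of_mem_erase hj))]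
      simp [sum_add_distrib, hu, hv, card_erase_of_mem, Nat.cast_pred (NeZero.pos n)]
    simp [hi, hsum, hu.symm, hv.symm]
  · simp only [hi, if_false, hdeg]
    split_ifs <;> simp_all
    linarith

theorem lamPF_starG_sup_edge_le {u v : Fin n} (hu : u ≠ 0) (hv : v ≠ 0) (huv : u ≠ v) :
    lamPF (starG n ⊔ edge u v) ≤ √((n : ℝ) + 1) :=
  lamPF_le_sqrt_of_mulVec_mulVec_one_le _ (starG_sup_edge_mulVec_mulVec_one_le hu hv huv)

end Star

theorem Real.sqrt_add_two_lt_sqrt_add {x c : ℝ} (hx : 0 ≤ x) (h : 1 < c * √x) :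
    √(x + 2) < √x + c := by
  have hsx := Real.sqrt_nonneg x
  rw [Real.sqrt_lt' (by nlinarith)]
  nlinarith [Real.sq_sqrt hx]

theorem eventually_sqrt_add_one_sub_sqrt_sub_one_lt {c : ℝ} (hc : 0 < c) :
    ∀ᶠ x : ℝ in atTop, √(x + 1) - √(x - 1) < c := by
  have h : Tendsto (fun x : ℝ => c * √(x - 1)) atTop atTop :=
    (Real.tendsto_sqrt_atTop.comp
      (tendsto_atTop_add_const_right _ (-1) tendsto_id)).const_mul_atTop hc
  filter_upwards [h.eventually_gt_atTop 1, eventually_ge_atTop 1] with x hx hx1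
  have hlt := Real.sqrt_add_two_lt_sqrt_add (sub_nonneg.2 hx1) hx
  rw [show x - 1 + 2 = x + 1 by ring] at hlt
  linarith

/-- For every cost `c > 0` there is `n₀` such that for all `n ≥ n₀` the
star `K_{1,n-1}` is bilaterally stable: adding an edge between any two distinct non-adjacent
vertices (i.e. two leaves) increases the largest eigenvalue by less than `c`, and attaching
a new leaf to the center increases it by `√n - √(n-1) < c`. -/
theorem star_bilaterally_stable (c : ℝ) (hc : 0 < c) :
    ∃ n₀ : ℕ, ∀ n : ℕ, n₀ ≤ n →
      (∀ u v : Fin n, u ≠ v → ¬ (starG n).Adj u v →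
          lamPF (starG n ⊔ SimpleGraph.fromEdgeSet {s(u, v)}) - lamPF (starG n) < c) ∧
        Real.sqrt (n : ℝ) - Real.sqrt ((n : ℝ) - 1) < c := by
  obtain ⟨n₀, hn₀⟩ := eventually_atTop.1 <|
    (tendsto_natCast_atTop_atTop.eventually (eventually_sqrt_add_one_sub_sqrt_sub_one_lt hc)).and
      (eventually_ge_atTop 2)
  refine ⟨n₀, fun n hn => ?_⟩
  obtain ⟨hgap, hn2⟩ := hn₀ n hn
  have : NeZero n := ⟨by omega⟩
  have hstar : √((n : ℝ) - 1) ≤ lamPF (starG n) := sqrt_le_lamPF_starG (by omega)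
  refine ⟨fun u v huv hnadj => ?_, ?_⟩
  · have hu : u ≠ 0 := fun h => hnadj (starG_adj.2 ⟨huv, .inl h⟩)
    have hv : v ≠ 0 := fun h => hnadj (starG_adj.2 ⟨huv, .inr h⟩)
    -- `edge u v` is by definition `fromEdgeSet {s(u, v)}`.
    have hsup : lamPF (starG n ⊔ SimpleGraph.fromEdgeSet {s(u, v)}) ≤ √((n : ℝ) + 1) :=
      lamPF_starG_sup_edge_le hu hv huv
    linarith
  · have hmono : √(n : ℝ) ≤ √((n : ℝ) + 1) := Real.sqrt_le_sqrt (by linarith)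
    linarith
end

section
/- Let c > 0 and let n be an integer with n > (2 + c(1 + c))/(2c). Let G' be the graph on n+1 vertices obtained from the complete graph K_n by adding one new vertex joined by a single edge to one vertex of K_n. Then λ_PF(G') − λ_PF(K_n) = λ_PF(G') − (n − 1) < c. Hence for every cost c > 0 there exists n₀ such that for all n > n₀ the clique K_n is bilaterally stable: no isolated agent can profitably connect to it. -/
/-!
`K_n` is `(n - 1)`-regular, so the all-ones vector is an eigenvector for `n - 1`, and by
Gershgorin's theorem no real eigenvalue of a nonnegative matrix exceeds its largest row sum;
hence `λ_PF(K_n) = n - 1`. For the clique with a pendant vertex apply the same bound to `A²`: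
if `μ` is an eigenvalue of `A` then `μ²` is one of `A²`, whose row sums `∑_{v ∼ u} deg v` are
at most `(n - 1)² + 1`. So `λ_PF(G') ≤ √((n - 1)² + 1)`, which is less than `n - 1 + c` as soon
as `2c(n - 1) + c² > 1`, and this follows from the bound on `n`.
-/

open Classical

/-- The graph on `n + 1` vertices consisting of the complete graph `K_n` on the first `n`
vertices together with one extra vertex (the last one) joined by a single edge to
vertex `0` of the clique. -/
def cliquePlus (n : ℕ) : SimpleGraph (Fin (n + 1)) where
  Adj u v := u ≠ v ∧ ((u ≠ Fin.last n ∧ v ≠ Fin.last n) ∨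
    (u = 0 ∧ v = Fin.last n) ∨ (v = 0 ∧ u = Fin.last n))
  symm := by
    constructor
    intro u v h
    refine ⟨h.1.symm, ?_⟩
    rcases h.2 with h' | h' | h'
    · exact Or.inl ⟨h'.2, h'.1⟩
    · exact Or.inr (Or.inr h')
    · exact Or.inr (Or.inl h')
  loopless := by
    constructor
    intro u h
    exact h.1 rfl

open Finset

theorem Matrix.le_of_mem_spectrum_of_sum_le {ι : Type*} [Fintype ι] [DecidableEq ι]
    {M : Matrix ι ι ℝ} (hM : ∀ i j, 0 ≤ M i j) {B : ℝ} (hB : ∀ i, ∑ j, M i j ≤ B) {μ : ℝ}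
    (hμ : μ ∈ spectrum ℝ M) : μ ≤ B := by
  rw [← Matrix.spectrum_toLin', ← Module.End.hasEigenvalue_iff_mem_spectrum] at hμ
  obtain ⟨k, hk⟩ := eigenvalue_mem_ball hμ
  have hrow : ∑ j ∈ univ.erase k, ‖M k j‖ = ∑ j, M k j - M k k := by
    rw [← sum_erase_add _ _ (mem_univ k), add_sub_cancel_right]
    exact sum_congr rfl fun j _ => Real.norm_of_nonneg (hM k j)
  rw [Metric.mem_closedBall, Real.dist_eq, hrow] at hk
  linarith [le_abs_self (μ - M k k), hB k]

namespace SimpleGraph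

variable {V : Type*} (G : SimpleGraph V) [DecidableRel G.Adj]

theorem adjMatrix_nonneg (i j : V) : 0 ≤ G.adjMatrix ℝ i j := by
  rw [adjMatrix_apply]; split_ifs <;> norm_num

variable [Fintype V]

theorem sum_adjMatrix_apply (i : V) : ∑ j, G.adjMatrix ℝ i j = G.degree i := by
  simp [adjMatrix_apply, sum_boole, ← card_neighborFinset_eq_degree, neighborFinset_eq_filter]

theorem sum_adjMatrix_mul_self_apply (i : V) :
    ∑ j, (G.adjMatrix ℝ * G.adjMatrix ℝ) i j = ∑ j ∈ G.neighborFinset i, (G.degree j : ℝ) := by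
  simp only [adjMatrix_mul_apply]
  rw [sum_comm]
  simp only [G.sum_adjMatrix_apply]

variable {G} [DecidableEq V]

theorem le_of_mem_spectrum_adjMatrix {B : ℝ} (hB : ∀ i, (G.degree i : ℝ) ≤ B) {μ : ℝ}
    (hμ : μ ∈ spectrum ℝ (G.adjMatrix ℝ)) : μ ≤ B :=
  Matrix.le_of_mem_spectrum_of_sum_le G.adjMatrix_nonneg
    (fun i => G.sum_adjMatrix_apply i ▸ hB i) hμ

theorem sq_le_of_mem_spectrum_adjMatrix_s16 {B : ℝ}
    (hB : ∀ i, ∑ j ∈ G.neighborFinset i, (G.degree j : ℝ) ≤ B) {μ : ℝ}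
    (hμ : μ ∈ spectrum ℝ (G.adjMatrix ℝ)) : μ ^ 2 ≤ B := by
  have hμ2 : μ ^ 2 ∈ spectrum ℝ (G.adjMatrix ℝ * G.adjMatrix ℝ) := by
    simpa [sq] using spectrum.pow_image_subset (G.adjMatrix ℝ) 2 ⟨μ, hμ, rfl⟩
  refine Matrix.le_of_mem_spectrum_of_sum_le (fun i j => ?_)
    (fun i => G.sum_adjMatrix_mul_self_apply i ▸ hB i) hμ2
  rw [Matrix.mul_apply]
  exact sum_nonneg fun k _ => mul_nonneg (G.adjMatrix_nonneg i k) (G.adjMatrix_nonneg k j)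

theorem mem_spectrum_adjMatrix_of_isRegularOfDegree [Nonempty V] {d : ℕ}
    (hG : G.IsRegularOfDegree d) : (d : ℝ) ∈ spectrum ℝ (G.adjMatrix ℝ) := by
  rw [← Matrix.spectrum_toLin', ← Module.End.hasEigenvalue_iff_mem_spectrum]
  refine Module.End.hasEigenvalue_of_hasEigenvector (x := Function.const V 1) ⟨?_, ?_⟩
  · rw [Module.End.mem_eigenspace_iff]
    ext v
    simpa using hG v
  · exact Function.const_ne_zero.mpr one_ne_zero

end SimpleGraph

open SimpleGraph

section lamPF

variable {V : Type*} [Fintype V] [DecidableEq V] {G : SimpleGraph V} [DecidableRel G.Adj]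

/-- `lamPF` is defined with classical decidability instances; this restates it for any others. -/
theorem lamPF_eq_sSup : lamPF G = sSup (spectrum ℝ (G.adjMatrix ℝ)) := by
  unfold lamPF; congr!

theorem lamPF_le_sqrt_of_sum_degree_le {B : ℝ}
    (hB : ∀ i, ∑ j ∈ G.neighborFinset i, (G.degree j : ℝ) ≤ B) : lamPF G ≤ √B := by
  rw [lamPF_eq_sSup]
  exact Real.sSup_le (fun _ hμ => Real.le_sqrt_of_sq_le (sq_le_of_mem_spectrum_adjMatrix_s16 hB hμ))
    (Real.sqrt_nonneg B)

theorem lamPF_eq_of_isRegularOfDegree [Nonempty V] {d : ℕ} (hG : G.IsRegularOfDegree d) :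
    lamPF G = d := by
  rw [lamPF_eq_sSup]
  exact IsGreatest.csSup_eq ⟨mem_spectrum_adjMatrix_of_isRegularOfDegree hG,
    fun _ hμ => le_of_mem_spectrum_adjMatrix (fun i => by rw [hG i]) hμ⟩

end lamPF

theorem lamPF_top (n : ℕ) [NeZero n] : lamPF (⊤ : SimpleGraph (Fin n)) = n - 1 := by
  rw [lamPF_eq_of_isRegularOfDegree IsRegularOfDegree.top, Fintype.card_fin,
    Nat.cast_sub NeZero.one_le, Nat.cast_one]

section cliquePlus

variable {n : ℕ}

theorem cliquePlus_adj_last_iff [NeZero n] {v : Fin (n + 1)} :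
    (cliquePlus n).Adj (Fin.last n) v ↔ v = 0 := by
  have := NeZero.ne n
  simp only [cliquePlus, ne_eq, Fin.ext_iff, Fin.val_last, Fin.val_zero]
  grind

theorem cliquePlus_adj_zero_iff [NeZero n] {v : Fin (n + 1)} :
    (cliquePlus n).Adj 0 v ↔ v ≠ 0 := by
  have := NeZero.ne n
  simp only [cliquePlus, ne_eq, Fin.ext_iff, Fin.val_last, Fin.val_zero]
  grind

theorem cliquePlus_adj_iff_of_ne {u : Fin (n + 1)} (h0 : u ≠ 0) (hl : u ≠ Fin.last n)
    {v : Fin (n + 1)} : (cliquePlus n).Adj u v ↔ v ≠ u ∧ v ≠ Fin.last n := by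
  simp only [cliquePlus, ne_eq, Fin.ext_iff, Fin.val_last, Fin.val_zero] at h0 hl ⊢
  grind

theorem cliquePlus_degree_last [NeZero n] : (cliquePlus n).degree (Fin.last n) = 1 := by
  rw [← card_neighborFinset_eq_degree, card_eq_one]
  exact ⟨0, by ext v; simp [cliquePlus_adj_last_iff]⟩

theorem cliquePlus_degree_zero [NeZero n] : (cliquePlus n).degree 0 = n := by
  rw [← card_neighborFinset_eq_degree]
  simp [neighborFinset_eq_filter, cliquePlus_adj_zero_iff, filter_ne']

theorem cliquePlus_degree_of_ne {u : Fin (n + 1)} (h0 : u ≠ 0) (hl : u ≠ Fin.last n) :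
    (cliquePlus n).degree u = n - 1 := by
  have hN : (cliquePlus n).neighborFinset u = {u, Fin.last n}ᶜ := by
    ext v; simp [cliquePlus_adj_iff_of_ne h0 hl]
  rw [← card_neighborFinset_eq_degree, hN, card_compl, card_pair hl, Fintype.card_fin]
  omega

theorem cliquePlus_sum_degree_neighborFinset_le (hn : 2 ≤ n) (u : Fin (n + 1)) :
    ∑ v ∈ (cliquePlus n).neighborFinset u, ((cliquePlus n).degree v : ℝ) ≤ (n - 1) ^ 2 + 1 := by
  have : NeZero n := ⟨by omega⟩
  have hl0 : Fin.last n ≠ 0 := Fin.last_pos'.ne'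
  have hcast : ((n - 1 : ℕ) : ℝ) = n - 1 := by rw [Nat.cast_sub (by omega), Nat.cast_one]
  have hnR : (2 : ℝ) ≤ n := by exact_mod_cast hn
  -- so that the neighbourhood sum becomes `(n - 1) deg u + [u ∼ 0] - (n - 2) [u ∼ last]`
  have hdeg : ∀ v, ((cliquePlus n).degree v : ℝ)
      = n - 1 + (if v = 0 then 1 else 0) - (n - 2) * (if v = Fin.last n then 1 else 0) := by
    intro v
    obtain rfl | hv0 := eq_or_ne v 0
    · simp [cliquePlus_degree_zero, hl0.symm]
    obtain rfl | hvl := eq_or_ne v (Fin.last n)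
    · simp [cliquePlus_degree_last, hl0]; ring
    simp [hv0, hvl, cliquePlus_degree_of_ne hv0 hvl, hcast]
  rw [sum_congr rfl fun v _ => hdeg v]
  simp only [sum_add_distrib, sum_sub_distrib, sum_const, card_neighborFinset_eq_degree,
    nsmul_eq_mul, ← mul_sum, sum_ite_eq', mem_neighborFinset]
  obtain rfl | hu0 := eq_or_ne u 0
  · simp [cliquePlus_degree_zero, cliquePlus_adj_zero_iff, hl0]
    nlinarith
  obtain rfl | hul := eq_or_ne u (Fin.last n)
  · simp [cliquePlus_degree_last, cliquePlus_adj_last_iff]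
    nlinarith
  simp [cliquePlus_degree_of_ne hu0 hul, cliquePlus_adj_iff_of_ne hu0 hul, hu0.symm, hcast,
    NeZero.ne n]
  nlinarith

end cliquePlus

/-- For every cost `c > 0` and every `n > (2 + c(1 + c))/(2c)`, joining a
new isolated vertex to the complete graph `K_n` by one edge increases the largest
eigenvalue `λ_PF(K_n) = n - 1` by less than `c`; hence the clique is bilaterally stable for
`n` large enough. -/
theorem clique_bilaterally_stable (c : ℝ) (hc : 0 < c) (n : ℕ)
    (hn : (2 + c * (1 + c)) / (2 * c) < (n : ℝ)) :
    lamPF (cliquePlus n) - lamPF (⊤ : SimpleGraph (Fin n)) < c ∧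
      lamPF (⊤ : SimpleGraph (Fin n)) = (n : ℝ) - 1 := by
  have hcn : 2 + c * (1 + c) < n * (2 * c) := by rwa [div_lt_iff₀ (by linarith)] at hn
  have hn2 : 2 ≤ n := by
    by_contra! h
    have : (n : ℝ) ≤ 1 := by exact_mod_cast Nat.le_of_lt_succ h
    nlinarith [sq_nonneg (c - 1)]
  have : NeZero n := ⟨by omega⟩
  have hnR : (2 : ℝ) ≤ n := by exact_mod_cast hn2
  have hsqrt : √((n - 1) ^ 2 + 1) < n - 1 + c := by
    rw [Real.sqrt_lt' (by linarith)]
    nlinarith [sq_nonneg (4 * c - 1)]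
  refine ⟨?_, lamPF_top n⟩
  rw [lamPF_top n]
  linarith [lamPF_le_sqrt_of_sum_degree_le (cliquePlus_sum_degree_neighborFinset_le hn2)]
end

section
/- Let n ≥ 2 and let e be any edge of the complete graph K_n. Then λ_PF(K_n) − λ_PF(K_n − e) ≤ 2/n, where K_n − e is the graph obtained from K_n by deleting the edge e. Consequently, if the link cost satisfies c > 2/n (in particular for any fixed c < 1/2 and n ≥ 2/c), the last edge completing the complete graph increases the largest eigenvalue by less than its cost, so the efficient complete graph K_n cannot be reached by the bilateral network formation process with evaluation period τ = 1. -/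
open Classical

/-!
Gershgorin's theorem bounds every eigenvalue of an adjacency matrix by the maximum degree, so
`λ_PF(K_n) ≤ n - 1`. Conversely, the largest eigenvalue of a symmetric matrix dominates its
Rayleigh quotients; at the all-ones vector the Rayleigh quotient of `K_n - e` is its average
degree `(n(n - 1) - 2) / n = n - 1 - 2/n`.
-/

open Matrix Finset

theorem Matrix.IsHermitian.dotProduct_mulVec_le_sSup_spectrum_mul {n : Type*} [Fintype n]
    [DecidableEq n] {A : Matrix n n ℝ} (hA : A.IsHermitian) (x : n → ℝ) :
    x ⬝ᵥ A *ᵥ x ≤ sSup (spectrum ℝ A) * (x ⬝ᵥ x) := by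
  set μ := sSup (spectrum ℝ A)
  have hpsd : (algebraMap ℝ (Matrix n n ℝ) μ - A).PosSemidef := by
    refine posSemidef_iff_isHermitian_and_spectrum_nonneg.mpr
      ⟨(isHermitian_diagonal _).sub hA, ?_⟩
    rw [← spectrum.singleton_sub_eq]
    rintro _ ⟨_, rfl, s, hs, rfl⟩
    exact sub_nonneg.mpr (le_csSup A.finite_real_spectrum.bddAbove hs)
  have h := hpsd.dotProduct_mulVec_nonneg x
  rw [star_trivial, sub_mulVec, dotProduct_sub, Algebra.algebraMap_eq_smul_one, smul_mulVec,
    one_mulVec, dotProduct_smul, smul_eq_mul] at h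
  linarith

namespace SimpleGraph

variable {V : Type*} [Fintype V]

section

variable (G : SimpleGraph V) [DecidableRel G.Adj]

-- `lamPF` fixes the classical decidability instances; this frees the lemmas below from them.
theorem lamPF_eq_sSup_spectrum [DecidableEq V] :
    lamPF G = sSup (spectrum ℝ (G.adjMatrix ℝ)) := by
  unfold lamPF
  congr!

theorem lamPF_le_maxDegree_s18 : lamPF G ≤ G.maxDegree := by
  rw [lamPF_eq_sSup_spectrum]
  refine Real.sSup_le (fun μ hμ => ?_) (Nat.cast_nonneg _)
  rw [← spectrum_toLin', ← Module.End.hasEigenvalue_iff_mem_spectrum] at hμ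
  obtain ⟨k, hk⟩ := eigenvalue_mem_ball hμ
  have hrow : ∑ j ∈ univ.erase k, ‖G.adjMatrix ℝ k j‖ = G.degree k := by
    rw [sum_erase _ (by simp), ← card_neighborFinset_eq_degree, neighborFinset_eq_filter]
    simp [adjMatrix_apply, apply_ite norm]
  rw [Metric.mem_closedBall, Real.dist_eq, adjMatrix_apply, if_neg (G.irrefl), sub_zero,
    hrow] at hk
  exact (le_abs_self μ).trans (hk.trans (by exact_mod_cast G.degree_le_maxDegree k))

theorem two_mul_card_edgeFinset_le_lamPF_mul_card [DecidableEq V] :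
    (2 * #G.edgeFinset : ℝ) ≤ lamPF G * Fintype.card V := by
  have h := (G.isHermitian_adjMatrix ℝ).dotProduct_mulVec_le_sSup_spectrum_mul 1
  rw [dotProduct_comm, ← natCast_card_dart_eq_dotProduct, dart_card_eq_twice_card_edges,
    one_dotProduct_one] at h
  rw [lamPF_eq_sSup_spectrum]
  exact_mod_cast h

theorem card_edgeFinset_deleteEdges_singleton_add_one [DecidableEq V] {e : Sym2 V}
    (he : e ∈ G.edgeSet) : #(G.deleteEdges {e}).edgeFinset + 1 = #G.edgeFinset := by
  have hdel : (G.deleteEdges {e}).edgeFinset = G.edgeFinset.erase e := by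
    ext; simp [and_comm]
  rw [hdel, card_erase_add_one (mem_edgeFinset.mpr he)]

end

theorem lamPF_top_le [DecidableEq V] [Nonempty V] :
    lamPF (⊤ : SimpleGraph V) ≤ Fintype.card V - 1 := by
  have hmax := (⊤ : SimpleGraph V).maxDegree_lt_card_verts
  have hle := lamPF_le_maxDegree_s18 (⊤ : SimpleGraph V)
  have : ((⊤ : SimpleGraph V).maxDegree : ℝ) + 1 ≤ Fintype.card V := by exact_mod_cast hmax
  linarith

theorem card_sub_one_sub_two_div_le_lamPF_top_deleteEdges [DecidableEq V] {u v : V}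
    (huv : u ≠ v) :
    (Fintype.card V : ℝ) - 1 - 2 / Fintype.card V ≤
      lamPF ((⊤ : SimpleGraph V).deleteEdges {s(u, v)}) := by
  have hN : (0 : ℝ) < Fintype.card V := by exact_mod_cast Fintype.card_pos_iff.mpr ⟨u⟩
  set N : ℝ := (Fintype.card V : ℝ)
  have hcount := card_edgeFinset_deleteEdges_singleton_add_one (⊤ : SimpleGraph V)
    (e := s(u, v)) (by simpa using huv)
  rw [card_edgeFinset_top_eq_card_choose_two] at hcount
  have hE : (#((⊤ : SimpleGraph V).deleteEdges {s(u, v)}).edgeFinset : ℝ) + 1 =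
      N * (N - 1) / 2 := by
    rw [← Nat.cast_choose_two]
    exact_mod_cast hcount
  calc N - 1 - 2 / N
      = 2 * #((⊤ : SimpleGraph V).deleteEdges {s(u, v)}).edgeFinset / N := by
        field_simp
        linarith
    _ ≤ lamPF ((⊤ : SimpleGraph V).deleteEdges {s(u, v)}) := by
        rw [div_le_iff₀ hN]
        exact two_mul_card_edgeFinset_le_lamPF_mul_card _

end SimpleGraph

theorem lamPF_complete_delete_edge_general (n : ℕ) (u v : Fin n) (huv : u ≠ v) :
    lamPF (⊤ : SimpleGraph (Fin n)) -
        lamPF ((⊤ : SimpleGraph (Fin n)).deleteEdges {s(u, v)}) ≤ 2 / (n : ℝ) ∧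
      ∀ c : ℝ, 2 / (n : ℝ) < c →
        lamPF (⊤ : SimpleGraph (Fin n)) -
          lamPF ((⊤ : SimpleGraph (Fin n)).deleteEdges {s(u, v)}) < c := by
  have : Nonempty (Fin n) := ⟨u⟩
  have htop := SimpleGraph.lamPF_top_le (V := Fin n)
  have hdel := SimpleGraph.card_sub_one_sub_two_div_le_lamPF_top_deleteEdges huv
  rw [Fintype.card_fin] at htop hdel
  have hle : lamPF (⊤ : SimpleGraph (Fin n)) -
      lamPF ((⊤ : SimpleGraph (Fin n)).deleteEdges {s(u, v)}) ≤ 2 / n := by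
    linarith
  exact ⟨hle, fun c hc => hle.trans_lt hc⟩

/-- For `n ≥ 2` and any edge `uv` of the complete graph `K_n`, deleting
that edge decreases the largest eigenvalue by at most `2/n`:
`λ_PF(K_n) - λ_PF(K_n - uv) ≤ 2/n`. Consequently, for any cost `c > 2/n` the last edge
completing the complete graph raises the largest eigenvalue by less than `c`, so the
efficient complete graph cannot be reached by the bilateral link formation process. -/
theorem lamPF_complete_delete_edge (n : ℕ) (hn : 2 ≤ n) (u v : Fin n) (huv : u ≠ v) :
    lamPF (⊤ : SimpleGraph (Fin n)) -
        lamPF ((⊤ : SimpleGraph (Fin n)).deleteEdges {s(u, v)}) ≤ 2 / (n : ℝ) ∧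
      ∀ c : ℝ, 2 / (n : ℝ) < c →
        lamPF (⊤ : SimpleGraph (Fin n)) -
          lamPF ((⊤ : SimpleGraph (Fin n)).deleteEdges {s(u, v)}) < c :=
  lamPF_complete_delete_edge_general n u v huv
end
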